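/- arXiv:1705.00586 — 2 statements merged into one kernel-verified Lean document; each statement's English description precedes it below -/
import Mathlib

section
/- Let ρ♯ : ℝ → ℝ be p-times differentiable with ρ♯⁽ᵖ⁾ being (r−p)-Hölder continuous with Hölder constant H, where p is a nonnegative integer and p < r ≤ p+1. Let W : ℝ → ℝ be integrable with ∫W(y)dy = 1, ∫ y^ℓ W(y)dy = 0 for ℓ = 1,…,p, and ∫|y|^r |W(y)|dy < ∞. Then for every h > 0, sup_{x∈ℝ} | ∫ ρ♯(x − yh) W(y) dy − ρ♯(x) | ≤ (H h^r / p!) ∫ |y|^r |W(y)| dy. -/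
open MeasureTheory

private lemma itDW_eq {f : ℝ → ℝ} {n m : ℕ} (hf : ContDiff ℝ n f) (hmn : m ≤ n)
    {s : Set ℝ} (hs : UniqueDiffOn ℝ s) {x : ℝ} (hx : x ∈ s) :
    iteratedDerivWithin m f s x = iteratedDeriv m f x := by
  rw [iteratedDerivWithin_eq_iteratedFDerivWithin, iteratedDeriv_eq_iteratedFDeriv,
    ← ((contDiff_iff_ftaylorSeries.mp hf).hasFTaylorSeriesUpToOn
        s).eq_iteratedFDerivWithin_of_uniqueDiffOn (by exact_mod_cast hmn) hs hx]
  rfl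

private lemma taylor_bound_pos {f : ℝ → ℝ} {p : ℕ} {r H : ℝ}
    (hpr : (p : ℝ) < r) (hrp : r ≤ p + 1) (hH0 : 0 ≤ H)
    (hf : ContDiff ℝ p f)
    (hH : ∀ x y : ℝ, |iteratedDeriv p f x - iteratedDeriv p f y| ≤ H * |x - y| ^ (r - p))
    (hp : 1 ≤ p) (x t : ℝ) (ht : 0 < t) :
    |f (x + t) - ∑ k ∈ Finset.range (p + 1),
        iteratedDeriv k f x * t ^ k / (Nat.factorial k)| ≤
      H * |t| ^ r / (Nat.factorial p) := by
  obtain ⟨q, rfl⟩ : ∃ q, p = q + 1 := ⟨p - 1, (Nat.succ_pred_eq_of_pos hp).symm⟩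
  set p := q + 1
  have hxx : x < x + t := by linarith
  have hud : UniqueDiffOn ℝ (Set.Icc x (x + t)) := uniqueDiffOn_Icc hxx
  have hcd : ContDiffOn ℝ q f (Set.Icc x (x + t)) :=
    (hf.of_le (by exact_mod_cast Nat.le_succ q)).contDiffOn
  have hdiff : DifferentiableOn ℝ (iteratedDerivWithin q f (Set.Icc x (x + t)))
      (Set.Ioo x (x + t)) := by
    intro y hy
    have h1 : iteratedDerivWithin q f (Set.Icc x (x + t)) =ᶠ[nhds y] iteratedDeriv q f := by
      filter_upwards [Ioo_mem_nhds hy.1 hy.2] with z hz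
      exact itDW_eq hf (Nat.le_succ q) hud (Set.Ioo_subset_Icc_self hz)
    have h2 : DifferentiableAt ℝ (iteratedDeriv q f) y :=
      (ContDiff.differentiable_iteratedDeriv q hf (by exact_mod_cast q.lt_succ_self)) y
    exact (h2.congr_of_eventuallyEq h1).differentiableWithinAt
  obtain ⟨ξ, hξ, hrem⟩ := taylor_mean_remainder_lagrange hxx.ne
    (by rwa [Set.uIcc_of_le hxx.le]) (by rwa [Set.uIcc_of_le hxx.le, Set.uIoo_of_le hxx.le])
  rw [Set.uIoo_of_le hxx.le] at hξ
  rw [Set.uIcc_of_le hxx.le] at hrem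
  have hξI : ξ ∈ Set.Icc x (x + t) := Set.Ioo_subset_Icc_self hξ
  have hxI : x ∈ Set.Icc x (x + t) := Set.left_mem_Icc.mpr hxx.le
  -- rewrite the Taylor polynomial with global iterated derivatives
  have hTW : taylorWithinEval f q (Set.Icc x (x + t)) x (x + t) =
      ∑ k ∈ Finset.range (q + 1), iteratedDeriv k f x * t ^ k / (Nat.factorial k) := by
    rw [taylor_within_apply]
    refine Finset.sum_congr rfl fun k hk => ?_
    have hk' : k ≤ p := Nat.le_succ_of_le (Nat.lt_succ_iff.mp (Finset.mem_range.mp hk))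
    rw [itDW_eq hf hk' hud hxI]
    have : x + t - x = t := by ring
    rw [this]; simp [smul_eq_mul]; ring
  have hDW : iteratedDerivWithin (q + 1) f (Set.Icc x (x + t)) ξ = iteratedDeriv p f ξ :=
    itDW_eq hf le_rfl hud hξI
  have hsum : ∑ k ∈ Finset.range (p + 1), iteratedDeriv k f x * t ^ k / (Nat.factorial k) =
      (∑ k ∈ Finset.range (q + 1), iteratedDeriv k f x * t ^ k / (Nat.factorial k)) +
        iteratedDeriv p f x * t ^ p / (Nat.factorial p) := by
    rw [Finset.sum_range_succ]
  have hxt : x + t - x = t := by ring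
  rw [hsum]
  have key : f (x + t) -
      ((∑ k ∈ Finset.range (q + 1), iteratedDeriv k f x * t ^ k / (Nat.factorial k)) +
        iteratedDeriv p f x * t ^ p / (Nat.factorial p)) =
      (iteratedDeriv p f ξ - iteratedDeriv p f x) * t ^ p / (Nat.factorial p) := by
    have := hrem
    rw [hTW, hDW, hxt] at this
    have hfac : ((q + 1).factorial : ℝ) = (Nat.factorial p : ℝ) := rfl
    rw [hfac] at this
    field_simp at this ⊢
    linarith [this]
  rw [key]
  have habs : |t| = t := abs_of_pos ht
  have hb1 : |iteratedDeriv p f ξ - iteratedDeriv p f x| ≤ H * t ^ (r - p) := by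
    have h1 := hH ξ x
    have h2 : |ξ - x| ≤ t := by
      rw [abs_of_pos (by linarith [hξ.1] : (0:ℝ) < ξ - x)]
      linarith [hξ.2]
    calc |iteratedDeriv p f ξ - iteratedDeriv p f x| ≤ H * |ξ - x| ^ (r - p) := h1
      _ ≤ H * t ^ (r - p) := by
          gcongr
  have htp : (0:ℝ) ≤ t ^ p := pow_nonneg ht.le p
  have hfp : (0:ℝ) < (Nat.factorial p : ℝ) := by positivity
  rw [abs_div, abs_mul, abs_of_nonneg htp, abs_of_pos hfp, habs]
  rw [div_le_div_iff_of_pos_right hfp]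
  calc |iteratedDeriv p f ξ - iteratedDeriv p f x| * t ^ p
      ≤ (H * t ^ (r - p)) * t ^ p := by gcongr
    _ = H * t ^ r := by
        rw [mul_assoc]
        congr 1
        rw [← Real.rpow_natCast t p, ← Real.rpow_add ht]
        ring_nf

private lemma taylor_bound {f : ℝ → ℝ} {p : ℕ} {r H : ℝ}
    (hpr : (p : ℝ) < r) (hrp : r ≤ p + 1)
    (hf : ContDiff ℝ p f)
    (hH : ∀ x y : ℝ, |iteratedDeriv p f x - iteratedDeriv p f y| ≤ H * |x - y| ^ (r - p))
    (x t : ℝ) :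
    |f (x + t) - ∑ k ∈ Finset.range (p + 1),
        iteratedDeriv k f x * t ^ k / (Nat.factorial k)| ≤
      H * |t| ^ r / (Nat.factorial p) := by
  have hr0 : 0 < r := lt_of_le_of_lt (Nat.cast_nonneg p) hpr
  have hH0 : 0 ≤ H := by
    have := hH 1 0
    simpa using le_trans (abs_nonneg _) this
  rcases Nat.eq_zero_or_pos p with hp0 | hp
  · subst hp0
    simp only [Finset.range_one, Finset.sum_singleton, iteratedDeriv_zero, pow_zero,
      Nat.factorial_zero, Nat.cast_one, mul_one, div_one]
    have := hH (x + t) x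
    simpa [abs_sub_comm] using this
  rcases lt_trichotomy t 0 with htneg | ht0 | htpos
  · -- apply the positive case to f ∘ neg
    set g : ℝ → ℝ := fun u => f (-u) with hg
    have hgc : ContDiff ℝ p g := hf.comp contDiff_neg
    have hgd : ∀ k (u : ℝ), iteratedDeriv k g u = (-1 : ℝ) ^ k * iteratedDeriv k f (-u) := by
      intro k u
      simpa [smul_eq_mul] using iteratedDeriv_comp_neg k f u
    have hgH : ∀ u v : ℝ, |iteratedDeriv p g u - iteratedDeriv p g v| ≤
        H * |u - v| ^ (r - p) := by
      intro u v
      rw [hgd, hgd, ← mul_sub, abs_mul, abs_pow, abs_neg, abs_one, one_pow, one_mul]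
      have := hH (-u) (-v)
      have habs : |(-u) - (-v)| = |u - v| := by rw [abs_sub_comm]; ring_nf
      rwa [habs] at this
    have := taylor_bound_pos hpr hrp hH0 hgc hgH hp (-x) (-t) (by linarith)
    have he1 : g (-x + -t) = f (x + t) := by simp [hg]; ring_nf
    have he2 : ∑ k ∈ Finset.range (p + 1), iteratedDeriv k g (-x) * (-t) ^ k /
        (Nat.factorial k) = ∑ k ∈ Finset.range (p + 1),
        iteratedDeriv k f x * t ^ k / (Nat.factorial k) := by
      refine Finset.sum_congr rfl fun k _ => ?_
      rw [hgd]
      have : (-1 : ℝ) ^ k * iteratedDeriv k f (- -x) * (-t) ^ k =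
          iteratedDeriv k f x * t ^ k := by
        rw [neg_neg]
        have : (-1 : ℝ) ^ k * (-t) ^ k = t ^ k := by
          rw [← mul_pow]; norm_num
        calc (-1 : ℝ) ^ k * iteratedDeriv k f x * (-t) ^ k
            = iteratedDeriv k f x * ((-1 : ℝ) ^ k * (-t) ^ k) := by ring
          _ = iteratedDeriv k f x * t ^ k := by rw [this]
      rw [this]
    rw [he1, he2, abs_neg] at this
    exact this
  · subst ht0
    have hsum : ∑ k ∈ Finset.range (p + 1), iteratedDeriv k f x * (0:ℝ) ^ k /
        (Nat.factorial k) = f x := by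
      rw [Finset.sum_eq_single 0]
      · simp
      · intro k _ hk
        simp [zero_pow hk]
      · simp
    rw [hsum]
    simp [Real.zero_rpow hr0.ne']
  · exact taylor_bound_pos hpr hrp hH0 hf hH hp x t htpos

theorem stmt_11 (ρs W : ℝ → ℝ) (p : ℕ) (r H : ℝ)
    (hpr : (p : ℝ) < r) (hrp : r ≤ p + 1)
    (hsmooth : ContDiff ℝ p ρs)
    (hHolder : ∀ x y : ℝ, |iteratedDeriv p ρs x - iteratedDeriv p ρs y| ≤ H * |x - y| ^ (r - p))
    (hW : Integrable W)
    (hW1 : (∫ y : ℝ, W y) = 1)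
    (hWmom : ∀ ℓ : ℕ, 1 ≤ ℓ → ℓ ≤ p → (∫ y : ℝ, y ^ ℓ * W y) = 0)
    (hWr : Integrable (fun y : ℝ => |y| ^ r * |W y|)) :
    ∀ h : ℝ, 0 < h → ∀ x : ℝ,
      |(∫ y : ℝ, ρs (x - y * h) * W y) - ρs x| ≤
        H * h ^ r / (Nat.factorial p) * ∫ y : ℝ, |y| ^ r * |W y| := by
  intro h hh x
  have hr0 : 0 < r := lt_of_le_of_lt (Nat.cast_nonneg p) hpr
  have hH0 : 0 ≤ H := by
    have := hHolder 1 0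
    simpa using le_trans (abs_nonneg _) this
  set c : ℝ := H * h ^ r / (Nat.factorial p) with hc
  have hc0 : 0 ≤ c := by
    apply div_nonneg _ (by positivity)
    exact mul_nonneg hH0 (Real.rpow_nonneg hh.le r)
  set a : ℕ → ℝ := fun k => iteratedDeriv k ρs x * (-h) ^ k / (Nat.factorial k) with ha
  set P : ℝ → ℝ := fun y => ∑ k ∈ Finset.range (p + 1), a k * y ^ k with hP
  set g : ℝ → ℝ := fun y => ρs (x - y * h) - P y with hgdef
  have key : ∀ y : ℝ, |g y| ≤ c * |y| ^ r := by
    intro y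
    have hb := taylor_bound hpr hrp hsmooth hHolder x (-(y * h))
    have he1 : x + -(y * h) = x - y * h := by ring
    have he2 : ∑ k ∈ Finset.range (p + 1),
        iteratedDeriv k ρs x * (-(y * h)) ^ k / (Nat.factorial k) = P y := by
      refine Finset.sum_congr rfl fun k _ => ?_
      have : (-(y * h)) ^ k = (-h) ^ k * y ^ k := by
        rw [← mul_pow]; ring_nf
      rw [this, ha]; ring
    rw [he1, he2] at hb
    have habs : |(-(y * h))| = |y| * h := by
      rw [abs_neg, abs_mul, abs_of_pos hh]
    rw [habs, Real.mul_rpow (abs_nonneg y) hh.le] at hb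
    calc |g y| ≤ H * (|y| ^ r * h ^ r) / (Nat.factorial p) := hb
      _ = c * |y| ^ r := by rw [hc]; ring
  -- continuity / measurability of g
  have hgcont : Continuous g := by
    apply Continuous.sub
    · exact hsmooth.continuous.comp (by continuity)
    · exact continuous_finset_sum _ fun k _ => continuous_const.mul (continuous_pow k)
  -- integrability facts
  have hcWr : Integrable (fun y : ℝ => c * (|y| ^ r * |W y|)) := hWr.const_mul c
  have IgW : Integrable (fun y : ℝ => g y * W y) := by
    refine Integrable.mono' hcWr
      (hgcont.aestronglyMeasurable.mul hW.aestronglyMeasurable) ?_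
    filter_upwards with y
    rw [Real.norm_eq_abs, abs_mul]
    calc |g y| * |W y| ≤ (c * |y| ^ r) * |W y| := by
          exact mul_le_mul_of_nonneg_right (key y) (abs_nonneg _)
      _ = c * (|y| ^ r * |W y|) := by ring
  have Ik : ∀ k : ℕ, k ≤ p → Integrable (fun y : ℝ => y ^ k * W y) := by
    intro k hk
    refine Integrable.mono' (hW.abs.add hWr)
      ((continuous_pow k).aestronglyMeasurable.mul hW.aestronglyMeasurable) ?_
    filter_upwards with y
    rw [Real.norm_eq_abs, abs_mul, abs_pow]
    have hyk : |y| ^ k ≤ 1 + |y| ^ r := by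
      rcases le_or_gt (|y|) 1 with hy1 | hy1
      · calc |y| ^ k ≤ 1 := pow_le_one₀ (abs_nonneg y) hy1
          _ ≤ 1 + |y| ^ r := le_add_of_nonneg_right (Real.rpow_nonneg (abs_nonneg y) r)
      · have h1 : |y| ^ k ≤ |y| ^ p := pow_le_pow_right₀ hy1.le hk
        have h2 : |y| ^ p = |y| ^ ((p : ℕ) : ℝ) := (Real.rpow_natCast _ _).symm
        have h3 : |y| ^ ((p : ℕ) : ℝ) ≤ |y| ^ r :=
          Real.rpow_le_rpow_of_exponent_le hy1.le hpr.le
        calc |y| ^ k ≤ |y| ^ r := by rw [h2] at h1; exact h1.trans h3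
          _ ≤ 1 + |y| ^ r := by linarith
    calc |y| ^ k * |W y| ≤ (1 + |y| ^ r) * |W y| := by
          exact mul_le_mul_of_nonneg_right hyk (abs_nonneg _)
      _ = |W y| + |y| ^ r * |W y| := by ring
  have IPW : Integrable (fun y : ℝ => P y * W y) := by
    have : (fun y : ℝ => P y * W y) =
        fun y => ∑ k ∈ Finset.range (p + 1), a k * (y ^ k * W y) := by
      funext y
      rw [hP, Finset.sum_mul]
      exact Finset.sum_congr rfl fun k _ => by ring
    rw [this]
    exact integrable_finset_sum _ fun k hk =>
      ((Ik k (Nat.lt_succ_iff.mp (Finset.mem_range.mp hk))).const_mul (a k))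
  -- compute the integral of P * W
  have hPW : (∫ y : ℝ, P y * W y) = ρs x := by
    have h1 : (∫ y : ℝ, P y * W y) =
        ∑ k ∈ Finset.range (p + 1), a k * ∫ y : ℝ, y ^ k * W y := by
      have : (fun y : ℝ => P y * W y) =
          fun y => ∑ k ∈ Finset.range (p + 1), a k * (y ^ k * W y) := by
        funext y
        rw [hP, Finset.sum_mul]
        exact Finset.sum_congr rfl fun k _ => by ring
      rw [this, integral_finset_sum]
      · exact Finset.sum_congr rfl fun k _ => integral_const_mul _ _
      · exact fun k hk =>
          (Ik k (Nat.lt_succ_iff.mp (Finset.mem_range.mp hk))).const_mul (a k)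
    rw [h1, Finset.sum_eq_single 0]
    · have : (∫ y : ℝ, y ^ 0 * W y) = 1 := by simpa using hW1
      rw [this, ha]
      simp
    · intro k _ hk
      rw [hWmom k (Nat.one_le_iff_ne_zero.mpr hk) (by
        rename_i hkmem
        exact Nat.lt_succ_iff.mp (Finset.mem_range.mp hkmem))]
      ring
    · simp
  -- decompose the integral
  have hdecomp : (∫ y : ℝ, ρs (x - y * h) * W y) =
      (∫ y : ℝ, g y * W y) + ∫ y : ℝ, P y * W y := by
    rw [← integral_add IgW IPW]
    congr 1
    funext y
    rw [hgdef]
    ring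
  rw [hdecomp, hPW, add_sub_cancel_right]
  calc |∫ y : ℝ, g y * W y| ≤ ∫ y : ℝ, |g y| * |W y| := by
        simpa [Real.norm_eq_abs, abs_mul] using
          norm_integral_le_integral_norm (μ := volume) (fun y : ℝ => g y * W y)
    _ ≤ ∫ y : ℝ, c * (|y| ^ r * |W y|) := by
        refine integral_mono (by simpa [abs_mul] using IgW.abs) hcWr fun y => ?_
        calc |g y| * |W y| ≤ (c * |y| ^ r) * |W y| :=
              mul_le_mul_of_nonneg_right (key y) (abs_nonneg _)
          _ = c * (|y| ^ r * |W y|) := by ring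
    _ = c * ∫ y : ℝ, |y| ^ r * |W y| := integral_const_mul c _
end

section
/- Let ρ♯(x) = (δ/π) e^{βx} ∫₀^∞ e^{−t − x²/(4t)} dt with δ > 0, |β| < 1. Let W : ℝ → ℝ be integrable with ∫W = 1 and ∫ y² |W(y)| dy < ∞. Then for any r ∈ (0,1) and any nonempty compact set I ⊂ ℝ, there is a constant C (depending on r, β, δ, W, I) such that sup_{x∈I} | ∫ ρ♯(x − yh)W(y)dy − ρ♯(x) | ≤ C h^r for all h ∈ (0,1]. -/
open MeasureTheory

private lemma exp_sq_lip (a c : ℝ) : |Real.exp (-a^2) - Real.exp (-c^2)| ≤ |a - c| := by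
  have hder : ∀ u : ℝ, HasDerivAt (fun v : ℝ => Real.exp (-v^2)) (-(2*u) * Real.exp (-u^2)) u := by
    intro u
    have h1 : HasDerivAt (fun v : ℝ => -v^2) (-(2*u)) u := by
      exact (hasDerivAt_pow 2 u).neg.congr_deriv (by norm_num)
    simpa [mul_comm] using h1.exp
  have hbound : ∀ u : ℝ, ‖-(2*u) * Real.exp (-u^2)‖ ≤ 1 := by
    intro u
    rw [Real.norm_eq_abs, abs_mul, Real.abs_exp, abs_neg, abs_mul]
    have h1 : Real.exp (-u^2) ≤ (1 + u^2)⁻¹ := by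
      rw [Real.exp_neg]
      exact inv_anti₀ (by positivity) (by linarith [Real.add_one_le_exp (u^2)])
    have h2 : |(2:ℝ)| * |u| ≤ 1 + u^2 := by
      rw [abs_two]
      nlinarith [sq_abs u, sq_nonneg (|u| - 1), abs_nonneg u]
    calc |(2:ℝ)| * |u| * Real.exp (-u^2) ≤ (1 + u^2) * (1 + u^2)⁻¹ :=
          mul_le_mul h2 h1 (Real.exp_pos _).le (by positivity)
      _ = 1 := mul_inv_cancel₀ (by positivity)
  have := convex_univ.norm_image_sub_le_of_norm_hasDerivWithin_le
    (f := fun v : ℝ => Real.exp (-v^2)) (f' := fun u : ℝ => -(2*u) * Real.exp (-u^2))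
    (fun u _ => (hder u).hasDerivWithinAt) (fun u _ => hbound u) (Set.mem_univ a) (Set.mem_univ c)
  rw [one_mul] at this
  calc |Real.exp (-a^2) - Real.exp (-c^2)| = ‖Real.exp (-c^2) - Real.exp (-a^2)‖ := by
        rw [Real.norm_eq_abs, abs_sub_comm]
    _ ≤ ‖c - a‖ := this
    _ = |a - c| := by rw [Real.norm_eq_abs, abs_sub_comm]

private lemma min_le_rpow {m r : ℝ} (hm : 0 ≤ m) (hr0 : 0 < r) (hr1 : r ≤ 1) :
    min 1 m ≤ m ^ r := by
  rcases le_or_gt 1 m with hge | hlt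
  · calc min 1 m ≤ 1 := min_le_left _ _
      _ ≤ m ^ r := Real.one_le_rpow hge hr0.le
  · rcases eq_or_lt_of_le hm with h0 | h0
    · simp [← h0, Real.zero_rpow hr0.ne']
    · calc min 1 m ≤ m := min_le_right _ _
        _ = m ^ (1:ℝ) := (Real.rpow_one m).symm
        _ ≤ m ^ r := Real.rpow_le_rpow_of_exponent_ge h0 hlt.le hr1

theorem stmt_12 (δ β : ℝ) (hδ : 0 < δ) (hβ : |β| < 1)
    (ρs : ℝ → ℝ)
    (hρs : ∀ x : ℝ, ρs x =
      (δ / Real.pi) * Real.exp (β * x) * ∫ t in Set.Ioi (0 : ℝ), Real.exp (-t - x ^ 2 / (4 * t)))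
    (W : ℝ → ℝ) (hW : Integrable W) (hW1 : (∫ y : ℝ, W y) = 1)
    (hW2 : Integrable (fun y : ℝ => y ^ 2 * |W y|)) :
    ∀ r : ℝ, 0 < r → r < 1 → ∀ I : Set ℝ, IsCompact I → I.Nonempty →
      ∃ C : ℝ, ∀ h : ℝ, 0 < h → h ≤ 1 → ∀ x ∈ I,
        |(∫ y : ℝ, ρs (x - y * h) * W y) - ρs x| ≤ C * h ^ r := by
  have hb : 0 < 1 - β^2 := by nlinarith [sq_abs β, abs_nonneg β]
  have hπ : 0 < δ / Real.pi := div_pos hδ Real.pi_pos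
  -- representation: complete the square
  have hrep : ∀ x : ℝ, ρs x = (δ / Real.pi) *
      ∫ t in Set.Ioi (0:ℝ), Real.exp (-((1-β^2)*t)) * Real.exp (-((x-2*β*t)^2/(4*t))) := by
    intro x
    rw [hρs x, mul_assoc]
    congr 1
    rw [← integral_const_mul]
    refine setIntegral_congr_fun measurableSet_Ioi fun t ht => ?_
    have ht0 : (0:ℝ) < t := ht
    rw [← Real.exp_add, ← Real.exp_add]
    congr 1
    field_simp
    ring
  have hcontOn : ∀ x : ℝ, ContinuousOn
      (fun t : ℝ => Real.exp (-((1-β^2)*t)) * Real.exp (-((x-2*β*t)^2/(4*t)))) (Set.Ioi 0) := by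
    intro x
    apply ContinuousOn.mul
    · exact (Real.continuous_exp.comp (by continuity)).continuousOn
    · refine Real.continuous_exp.comp_continuousOn (ContinuousOn.neg ?_)
      refine ContinuousOn.div (by continuity : Continuous fun t : ℝ => (x-2*β*t)^2).continuousOn
        (by continuity : Continuous fun t : ℝ => 4*t).continuousOn ?_
      intro t ht
      have ht0 : (0:ℝ) < t := ht
      positivity
  have hexp_int : IntegrableOn (fun t : ℝ => Real.exp (-((1-β^2)*t))) (Set.Ioi 0) := by
    exact (exp_neg_integrableOn_Ioi 0 hb).congr_fun (fun t _ => by simp only [neg_mul]) measurableSet_Ioi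
  have hptbd : ∀ x t : ℝ, t ∈ Set.Ioi (0:ℝ) →
      ‖Real.exp (-((1-β^2)*t)) * Real.exp (-((x-2*β*t)^2/(4*t)))‖ ≤ Real.exp (-((1-β^2)*t)) := by
    intro x t ht
    have ht0 : (0:ℝ) < t := ht
    rw [Real.norm_eq_abs, abs_mul, Real.abs_exp, Real.abs_exp]
    have h1 : Real.exp (-((x-2*β*t)^2/(4*t))) ≤ 1 := by
      rw [Real.exp_le_one_iff]
      have : 0 ≤ (x-2*β*t)^2/(4*t) := div_nonneg (sq_nonneg _) (by linarith)
      linarith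
    nth_rewrite 2 [← mul_one (Real.exp (-((1-β^2)*t)))]
    exact mul_le_mul_of_nonneg_left h1 (Real.exp_pos _).le
  have hg_int : ∀ x : ℝ, IntegrableOn
      (fun t : ℝ => Real.exp (-((1-β^2)*t)) * Real.exp (-((x-2*β*t)^2/(4*t)))) (Set.Ioi 0) := by
    intro x
    refine Integrable.mono' hexp_int ((hcontOn x).aestronglyMeasurable measurableSet_Ioi) ?_
    exact (ae_restrict_iff' measurableSet_Ioi).mpr (ae_of_all _ fun t ht => hptbd x t ht)
  have hbd : ∀ z : ℝ,
      |ρs z| ≤ (δ/Real.pi) * ∫ t in Set.Ioi (0:ℝ), Real.exp (-((1-β^2)*t)) := by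
    intro z
    rw [hrep z, abs_mul, abs_of_pos hπ]
    refine mul_le_mul_of_nonneg_left ?_ hπ.le
    calc |∫ t in Set.Ioi (0:ℝ), Real.exp (-((1-β^2)*t)) * Real.exp (-((z-2*β*t)^2/(4*t)))|
        = ‖∫ t in Set.Ioi (0:ℝ), Real.exp (-((1-β^2)*t)) * Real.exp (-((z-2*β*t)^2/(4*t)))‖ :=
          (Real.norm_eq_abs _).symm
      _ ≤ ∫ t in Set.Ioi (0:ℝ), Real.exp (-((1-β^2)*t)) :=
          norm_integral_le_of_norm_le hexp_int
            ((ae_restrict_iff' measurableSet_Ioi).mpr (ae_of_all _ fun t ht => hptbd z t ht))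
  intro r hr0 hr1 I _ _
  have hmaj_int : IntegrableOn (fun t : ℝ => Real.exp (-((1-β^2)*t)) * t ^ (-(r/2))) (Set.Ioi 0) := by
    have h := integrableOn_rpow_mul_exp_neg_mul_rpow (p := 1) (s := -(r/2)) (b := 1-β^2)
      (by linarith) (by norm_num) hb
    refine h.congr_fun (fun t ht => ?_) measurableSet_Ioi
    show t ^ (-(r/2)) * Real.exp (-(1-β^2) * t ^ (1:ℝ)) = _
    rw [Real.rpow_one, neg_mul, mul_comm]
  set K := ∫ t in Set.Ioi (0:ℝ), Real.exp (-((1-β^2)*t)) * t ^ (-(r/2)) with hKdef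
  have hKnn : 0 ≤ K :=
    setIntegral_nonneg measurableSet_Ioi fun t ht =>
      mul_nonneg (Real.exp_pos _).le (Real.rpow_nonneg (le_of_lt ht) _)
  -- pointwise Hölder bound for the integrand
  have hcore : ∀ x y t : ℝ, t ∈ Set.Ioi (0:ℝ) →
      ‖Real.exp (-((1-β^2)*t)) * Real.exp (-((x-2*β*t)^2/(4*t))) -
        Real.exp (-((1-β^2)*t)) * Real.exp (-((y-2*β*t)^2/(4*t)))‖ ≤
      |x - y| ^ r * (Real.exp (-((1-β^2)*t)) * t ^ (-(r/2))) := by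
    intro x y t ht
    have ht0 : (0:ℝ) < t := ht
    have hst : 0 < Real.sqrt t := Real.sqrt_pos.mpr ht0
    have hsq : ∀ u : ℝ, u^2/(4*t) = (u/(2*Real.sqrt t))^2 := by
      intro u
      rw [div_pow, mul_pow, Real.sq_sqrt ht0.le]
      norm_num
    have hdiff : (x-2*β*t)/(2*Real.sqrt t) - (y-2*β*t)/(2*Real.sqrt t)
        = (x-y)/(2*Real.sqrt t) := by
      rw [div_sub_div_same]
      ring_nf
    have hone : |Real.exp (-((x-2*β*t)/(2*Real.sqrt t))^2)
        - Real.exp (-((y-2*β*t)/(2*Real.sqrt t))^2)| ≤ 1 := by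
      have e1 := Real.exp_pos (-((x-2*β*t)/(2*Real.sqrt t))^2)
      have e2 := Real.exp_pos (-((y-2*β*t)/(2*Real.sqrt t))^2)
      have e3 : Real.exp (-((x-2*β*t)/(2*Real.sqrt t))^2) ≤ 1 :=
        Real.exp_le_one_iff.mpr (neg_nonpos.mpr (sq_nonneg _))
      have e4 : Real.exp (-((y-2*β*t)/(2*Real.sqrt t))^2) ≤ 1 :=
        Real.exp_le_one_iff.mpr (neg_nonpos.mpr (sq_nonneg _))
      rw [abs_sub_le_iff]
      constructor <;> linarith
    have hkey : |Real.exp (-((x-2*β*t)/(2*Real.sqrt t))^2)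
        - Real.exp (-((y-2*β*t)/(2*Real.sqrt t))^2)| ≤ min 1 (|x-y|/(2*Real.sqrt t)) := by
      refine le_min hone ?_
      calc |Real.exp (-((x-2*β*t)/(2*Real.sqrt t))^2)
            - Real.exp (-((y-2*β*t)/(2*Real.sqrt t))^2)|
          ≤ |(x-2*β*t)/(2*Real.sqrt t) - (y-2*β*t)/(2*Real.sqrt t)| := exp_sq_lip _ _
        _ = |(x-y)/(2*Real.sqrt t)| := by rw [hdiff]
        _ = |x-y|/(2*Real.sqrt t) := by
            rw [abs_div, abs_of_pos (by positivity : (0:ℝ) < 2*Real.sqrt t)]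
    have hmin : min 1 (|x-y|/(2*Real.sqrt t)) ≤ (|x-y|/(2*Real.sqrt t)) ^ r :=
      min_le_rpow (by positivity) hr0 hr1.le
    have hts : t ^ (r/2) ≤ (2*Real.sqrt t) ^ r := by
      have h4 : t ^ (r/2) = (Real.sqrt t) ^ r := by
        rw [Real.sqrt_eq_rpow, ← Real.rpow_mul ht0.le]
        ring_nf
      rw [h4]
      exact Real.rpow_le_rpow (Real.sqrt_nonneg t) (by linarith) hr0.le
    have h3 : (|x-y|/(2*Real.sqrt t)) ^ r ≤ |x-y| ^ r * t ^ (-(r/2)) := by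
      rw [Real.div_rpow (abs_nonneg _) (by positivity), Real.rpow_neg ht0.le, ← div_eq_mul_inv]
      have htpos : 0 < t ^ (r/2) := Real.rpow_pos_of_pos ht0 _
      exact div_le_div_of_nonneg_left (Real.rpow_nonneg (abs_nonneg _) r) htpos hts
    calc ‖Real.exp (-((1-β^2)*t)) * Real.exp (-((x-2*β*t)^2/(4*t))) -
          Real.exp (-((1-β^2)*t)) * Real.exp (-((y-2*β*t)^2/(4*t)))‖
        = Real.exp (-((1-β^2)*t)) *
          |Real.exp (-((x-2*β*t)^2/(4*t))) - Real.exp (-((y-2*β*t)^2/(4*t)))| := by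
          rw [Real.norm_eq_abs, ← mul_sub, abs_mul, Real.abs_exp]
      _ ≤ Real.exp (-((1-β^2)*t)) * (|x-y| ^ r * t ^ (-(r/2))) := by
          refine mul_le_mul_of_nonneg_left ?_ (Real.exp_pos _).le
          rw [hsq (x-2*β*t), hsq (y-2*β*t)]
          exact le_trans hkey (le_trans hmin h3)
      _ = |x - y| ^ r * (Real.exp (-((1-β^2)*t)) * t ^ (-(r/2))) := by ring
  -- global Hölder bound
  have hholder : ∀ x y : ℝ, |ρs x - ρs y| ≤ ((δ/Real.pi) * K) * |x - y| ^ r := by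
    intro x y
    rw [hrep x, hrep y, ← mul_sub, abs_mul, abs_of_pos hπ]
    rw [← integral_sub (hg_int x) (hg_int y)]
    have hle : ‖∫ t in Set.Ioi (0:ℝ),
        (Real.exp (-((1-β^2)*t)) * Real.exp (-((x-2*β*t)^2/(4*t))) -
         Real.exp (-((1-β^2)*t)) * Real.exp (-((y-2*β*t)^2/(4*t))))‖ ≤
        ∫ t in Set.Ioi (0:ℝ), |x-y| ^ r * (Real.exp (-((1-β^2)*t)) * t ^ (-(r/2))) :=
      norm_integral_le_of_norm_le (hmaj_int.const_mul _)
        ((ae_restrict_iff' measurableSet_Ioi).mpr (ae_of_all _ fun t ht => hcore x y t ht))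
    rw [integral_const_mul, Real.norm_eq_abs] at hle
    calc (δ/Real.pi) * |∫ t in Set.Ioi (0:ℝ),
          (Real.exp (-((1-β^2)*t)) * Real.exp (-((x-2*β*t)^2/(4*t))) -
           Real.exp (-((1-β^2)*t)) * Real.exp (-((y-2*β*t)^2/(4*t))))|
        ≤ (δ/Real.pi) * (|x-y| ^ r * K) := mul_le_mul_of_nonneg_left hle hπ.le
      _ = ((δ/Real.pi) * K) * |x - y| ^ r := by ring
  set L := (δ/Real.pi) * K with hLdef
  have hLnn : 0 ≤ L := mul_nonneg hπ.le hKnn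
  -- continuity of ρs
  have hcont : Continuous ρs := by
    rw [continuous_iff_continuousAt]
    intro x
    rw [ContinuousAt, tendsto_iff_dist_tendsto_zero]
    have h1 : Filter.Tendsto (fun y : ℝ => |y - x|) (nhds x) (nhds 0) := by
      have := ((continuous_id.sub (continuous_const (y := x))).abs).tendsto x
      simpa using this
    have h2 : ContinuousAt (fun m : ℝ => m ^ r) 0 :=
      Real.continuousAt_rpow_const 0 r (Or.inr hr0.le)
    have h3 := h2.tendsto.comp h1
    rw [Real.zero_rpow hr0.ne'] at h3
    have hub : Filter.Tendsto (fun y : ℝ => L * |y - x| ^ r) (nhds x) (nhds 0) := by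
      simpa using h3.const_mul L
    refine squeeze_zero (fun y => dist_nonneg) (fun y => ?_) hub
    rw [Real.dist_eq]
    exact hholder y x
  -- conclusion
  have hWint2 : Integrable (fun y : ℝ => (1 + y^2) * |W y|) :=
    (hW.abs.add hW2).congr (Filter.Eventually.of_forall fun y => by simp only [Pi.add_apply]; ring)
  refine ⟨L * ∫ y : ℝ, (1 + y^2) * |W y|, ?_⟩
  intro h hh0 hh1 x hx
  have hfx_int : Integrable (fun y : ℝ => ρs (x - y*h) * W y) := by
    have hm : AEStronglyMeasurable (fun y : ℝ => ρs (x - y*h)) volume :=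
      (hcont.comp (continuous_const.sub (continuous_id.mul continuous_const))).aestronglyMeasurable
    refine Integrable.mono'
      (hW.norm.const_mul ((δ/Real.pi) * ∫ t in Set.Ioi (0:ℝ), Real.exp (-((1-β^2)*t))))
      (hm.mul hW.1) (ae_of_all _ fun y => ?_)
    rw [Real.norm_eq_abs, abs_mul, Real.norm_eq_abs]
    exact mul_le_mul_of_nonneg_right (hbd _) (abs_nonneg _)
  have h2 : ∫ y : ℝ, (ρs (x - y*h) - ρs x) * W y
      = (∫ y : ℝ, ρs (x - y*h) * W y) - ρs x := by
    simp only [sub_mul]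
    rw [integral_sub hfx_int (hW.const_mul (ρs x)), integral_const_mul, hW1, mul_one]
  rw [← h2]
  have hptw : ∀ y : ℝ, ‖(ρs (x - y*h) - ρs x) * W y‖ ≤ (L * h ^ r) * ((1 + y^2) * |W y|) := by
    intro y
    rw [Real.norm_eq_abs, abs_mul]
    have e0 : |x - y*h - x| = |y| * h := by
      rw [show x - y*h - x = -(y*h) by ring, abs_neg, abs_mul, abs_of_pos hh0]
    have e1 : |ρs (x - y*h) - ρs x| ≤ L * (|y| ^ r * h ^ r) := by
      calc |ρs (x - y*h) - ρs x| ≤ L * |x - y*h - x| ^ r := hholder _ _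
        _ = L * (|y| * h) ^ r := by rw [e0]
        _ = L * (|y| ^ r * h ^ r) := by rw [Real.mul_rpow (abs_nonneg y) hh0.le]
    have e2 : |y| ^ r ≤ 1 + y^2 := by
      rcases le_or_gt |y| 1 with hy | hy
      · have := Real.rpow_le_one (abs_nonneg y) hy hr0.le
        nlinarith [sq_nonneg y]
      · have e3 : |y| ^ r ≤ |y| ^ (2:ℝ) := Real.rpow_le_rpow_of_exponent_le hy.le (by linarith)
        have e4 : |y| ^ (2:ℝ) = y^2 := by
          rw [show (2:ℝ) = ((2:ℕ):ℝ) by norm_num, Real.rpow_natCast, sq_abs]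
        nlinarith
    have hhr : 0 ≤ h ^ r := Real.rpow_nonneg hh0.le r
    calc |ρs (x - y*h) - ρs x| * |W y| ≤ (L * (|y| ^ r * h ^ r)) * |W y| :=
          mul_le_mul_of_nonneg_right e1 (abs_nonneg _)
      _ ≤ (L * ((1 + y^2) * h ^ r)) * |W y| := by
          refine mul_le_mul_of_nonneg_right (mul_le_mul_of_nonneg_left ?_ hLnn) (abs_nonneg _)
          exact mul_le_mul_of_nonneg_right e2 hhr
      _ = (L * h ^ r) * ((1 + y^2) * |W y|) := by ring
  calc |∫ y : ℝ, (ρs (x - y*h) - ρs x) * W y|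
      = ‖∫ y : ℝ, (ρs (x - y*h) - ρs x) * W y‖ := (Real.norm_eq_abs _).symm
    _ ≤ ∫ y : ℝ, (L * h ^ r) * ((1 + y^2) * |W y|) :=
        norm_integral_le_of_norm_le (hWint2.const_mul _) (ae_of_all _ hptw)
    _ = (L * h ^ r) * ∫ y : ℝ, (1 + y^2) * |W y| := integral_const_mul _ _
    _ = (L * ∫ y : ℝ, (1 + y^2) * |W y|) * h ^ r := by ring
end
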